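/- arXiv:1704.08964 — 2 statements merged into one kernel-verified Lean document; each statement's English description precedes it below -/
import Mathlib

section
/- For every w with 0 < w < v there exists a constant C_w > 0 such that for all integers 0 ≤ k ≤ i < j one has E[ |E[U_i U_j | 𝓕_k]| ] ≤ C_w (j − i)^{−w/2}. -/
/-!
Let `h = j - i`. Since `E[U_i U_j | 𝓕_k]` is `𝓕_k`-measurable, its `L¹` norm is the difference of
the integrals of `U_i U_j` over the `𝓕_k`-sets where it is nonnegative and negative, so it suffices
to bound `|∫_B U_i U_j|` uniformly in `B ∈ 𝓕_k`. Truncate both factors at a level `M`: the pair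
`1_B τ_M(U_i)`, `τ_M(U_j)` is bounded by `M`, measurable with respect to `σ(U_0, …, U_i)` and
`σ(U_j, U_{j+1}, …)`, and `τ_M(U_j)` is centred by symmetry, so the covariance inequality for
bounded variables under strong mixing bounds its contribution by `4 M² C h^{-v}`. By stationarity
the truncation error is at most `4 E[U_0⁴] / M²`, and `M = h^{v/4}` makes both terms `O(h^{-v/2})`.
-/

open MeasureTheory ProbabilityTheory Filter Finset
open scoped ProbabilityTheory ENNReal NNReal BigOperators

namespace DepNoise

variable {Ω : Type*} [MeasureSpace Ω]

/-- Variance of `U 0`. -/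
noncomputable def varU (U : ℕ → Ω → ℝ) : ℝ :=
  (∫ ω, (U 0 ω) ^ 2) - (∫ ω, U 0 ω) ^ 2

/-- Autocovariance `γ(h) = Cov(U 0, U h)`. -/
noncomputable def gammaCov (U : ℕ → Ω → ℝ) (h : ℕ) : ℝ :=
  (∫ ω, U 0 ω * U h ω) - (∫ ω, U 0 ω) * (∫ ω, U h ω)

/-- The σ-algebra `σ(U 0, …, U k)`. -/
def pastSigma (U : ℕ → Ω → ℝ) (k : ℕ) : MeasurableSpace Ω :=
  ⨆ i : Fin (k + 1), MeasurableSpace.comap (U i) inferInstance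

/-- The σ-algebra `σ(U m, U (m+1), …)`. -/
def futureSigma (U : ℕ → Ω → ℝ) (m : ℕ) : MeasurableSpace Ω :=
  ⨆ i : ℕ, MeasurableSpace.comap (U (m + i)) inferInstance

end DepNoise

section Truncation

noncomputable def trunc (M x : ℝ) : ℝ := max (-M) (min M x)

variable {M : ℝ}

theorem continuous_trunc (M : ℝ) : Continuous (trunc M) :=
  continuous_const.max (continuous_const.min continuous_id)

theorem abs_trunc_le (hM : 0 ≤ M) (x : ℝ) : |trunc M x| ≤ M :=
  abs_le.mpr ⟨le_max_left _ _, max_le (by linarith) (min_le_left _ _)⟩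

theorem abs_trunc_le_abs (hM : 0 ≤ M) (x : ℝ) : |trunc M x| ≤ |x| := by
  unfold trunc
  rw [abs_le]
  constructor
  · exact le_max_of_le_right (le_min (by linarith [abs_nonneg x]) (neg_abs_le x))
  · exact max_le (by linarith [abs_nonneg x]) ((min_le_right _ _).trans (le_abs_self x))

theorem trunc_of_abs_le {x : ℝ} (h : |x| ≤ M) : trunc M x = x := by
  rw [abs_le] at h
  rw [trunc, min_eq_right h.2, max_eq_right h.1]

theorem trunc_neg (hM : 0 ≤ M) (x : ℝ) : trunc M (-x) = -trunc M x := by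
  simp only [trunc, min_def, max_def]
  split_ifs <;> linarith

theorem sq_mul_abs_mul_sub_trunc_mul_trunc_le (hM : 0 ≤ M) (x y : ℝ) :
    M ^ 2 * |x * y - trunc M x * trunc M y| ≤ 2 * (x ^ 4 + y ^ 4) := by
  by_cases h : |x| ≤ M ∧ |y| ≤ M
  · rw [trunc_of_abs_le h.1, trunc_of_abs_le h.2, sub_self, abs_zero, mul_zero]
    positivity
  have hM2 : M ^ 2 ≤ x ^ 2 + y ^ 2 := by
    rcases not_and_or.mp h with hx | hy
    · nlinarith [sq_abs x, sq_nonneg y, mul_self_le_mul_self hM (not_le.mp hx).le]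
    · nlinarith [sq_abs y, sq_nonneg x, mul_self_le_mul_self hM (not_le.mp hy).le]
  have hdiff : |x * y - trunc M x * trunc M y| ≤ x ^ 2 + y ^ 2 := by
    calc |x * y - trunc M x * trunc M y| ≤ |x| * |y| + |trunc M x| * |trunc M y| := by
          rw [← abs_mul, ← abs_mul]; exact abs_sub _ _
      _ ≤ |x| * |y| + |x| * |y| := add_le_add_right (mul_le_mul (abs_trunc_le_abs hM x)
          (abs_trunc_le_abs hM y) (abs_nonneg _) (abs_nonneg _)) _
      _ ≤ x ^ 2 + y ^ 2 := by nlinarith [sq_abs x, sq_abs y, sq_nonneg (|x| - |y|)]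
  calc M ^ 2 * |x * y - trunc M x * trunc M y| ≤ (x ^ 2 + y ^ 2) * (x ^ 2 + y ^ 2) :=
        mul_le_mul hM2 hdiff (abs_nonneg _) (by positivity)
    _ ≤ 2 * (x ^ 4 + y ^ 4) := by nlinarith [sq_nonneg (x ^ 2 - y ^ 2)]

end Truncation

section Covariance

variable {Ω : Type*} {m m₁ m₂ m0 : MeasurableSpace Ω} {μ : Measure Ω}

theorem integral_comp_eq_zero_of_identDistrib_neg {X : Ω → ℝ} {φ : ℝ → ℝ}
    (hX : IdentDistrib X (fun ω => -X ω) μ μ) (hφ : Measurable φ) (hodd : ∀ x, φ (-x) = -φ x) :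
    ∫ ω, φ (X ω) ∂μ = 0 := by
  have h := (hX.comp hφ).integral_eq
  simp only [Function.comp_def, hodd, integral_neg] at h
  linarith

theorem integral_abs_condExp_le_of_abs_setIntegral_le [IsFiniteMeasure μ] (hm : m ≤ m0)
    {f : Ω → ℝ} {β : ℝ} (hf : ∀ s, MeasurableSet[m] s → |∫ x in s, f x ∂μ| ≤ β) :
    ∫ x, |(μ[f|m]) x| ∂μ ≤ 2 * β := by
  have hβ : 0 ≤ β := by simpa using hf ∅ (@MeasurableSet.empty _ m)
  by_cases hfi : Integrable f μ
  swap
  · simp [condExp_of_not_integrable hfi, hβ]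
  set g := μ[f|m]
  set s := {x | 0 ≤ g x}
  have hs : MeasurableSet[m] s := stronglyMeasurable_condExp.measurable measurableSet_Ici
  have hs0 : MeasurableSet s := hm _ hs
  have hsplit : ∫ x, |g x| ∂μ = ∫ x in s, g x ∂μ - ∫ x in sᶜ, g x ∂μ := by
    rw [← integral_add_compl hs0 integrable_condExp.abs,
      setIntegral_congr_fun hs0 fun x hx => abs_of_nonneg hx,
      setIntegral_congr_fun hs0.compl fun x (hx : ¬ 0 ≤ g x) => abs_of_neg (not_le.mp hx),
      integral_neg]
    ring
  rw [hsplit, setIntegral_condExp hm hfi hs, setIntegral_condExp hm hfi hs.compl]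
  linarith [abs_le.mp (hf s hs), abs_le.mp (hf sᶜ hs.compl)]

theorem abs_integral_mul_le_of_abs_setIntegral_le [IsProbabilityMeasure μ] (hm : m ≤ m0)
    {Y Z : Ω → ℝ} {b β : ℝ} (hY : StronglyMeasurable[m] Y) (hYb : ∀ x, |Y x| ≤ b)
    (hZ : Integrable Z μ) (hZβ : ∀ s, MeasurableSet[m] s → |∫ x in s, Z x ∂μ| ≤ β) :
    |∫ x, Y x * Z x ∂μ| ≤ 2 * b * β := by
  have hb : 0 ≤ b := (abs_nonneg _).trans (hYb (nonempty_of_isProbabilityMeasure μ).some)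
  have hYZ : Integrable (Y * Z) μ :=
    hZ.bdd_mul (hY.mono hm).aestronglyMeasurable (.of_forall hYb)
  calc |∫ x, Y x * Z x ∂μ| = |∫ x, Y x * (μ[Z|m]) x ∂μ| := by
        change |∫ x, (Y * Z) x ∂μ| = _
        rw [← integral_condExp hm,
          integral_congr_ae (condExp_mul_of_stronglyMeasurable_left hY hYZ hZ)]
        rfl
    _ ≤ ∫ x, b * |(μ[Z|m]) x| ∂μ :=
        norm_integral_le_of_norm_le (integrable_condExp.abs.const_mul b) (.of_forall fun x => by
          rw [Real.norm_eq_abs, abs_mul]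
          exact mul_le_mul_of_nonneg_right (hYb x) (abs_nonneg _))
    _ ≤ b * (2 * β) := by
        rw [integral_const_mul]
        exact mul_le_mul_of_nonneg_left (integral_abs_condExp_le_of_abs_setIntegral_le hm hZβ) hb
    _ = 2 * b * β := by ring

theorem abs_integral_mul_sub_le_of_mixing [IsProbabilityMeasure μ]
    (hm₁ : m₁ ≤ m0) (hm₂ : m₂ ≤ m0) {X Y : Ω → ℝ} {a b α : ℝ}
    (hX : StronglyMeasurable[m₁] X) (hY : StronglyMeasurable[m₂] Y)
    (hXa : ∀ x, |X x| ≤ a) (hYb : ∀ x, |Y x| ≤ b)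
    (hα : ∀ A B, MeasurableSet[m₁] A → MeasurableSet[m₂] B →
      |μ.real (A ∩ B) - μ.real A * μ.real B| ≤ α) :
    |∫ x, X x * Y x ∂μ - (∫ x, X x ∂μ) * ∫ x, Y x ∂μ| ≤ 4 * a * b * α := by
  have hXm : AEStronglyMeasurable X μ := (hX.mono hm₁).aestronglyMeasurable
  have hYi : Integrable Y μ := .of_bound (hY.mono hm₂).aestronglyMeasurable b (.of_forall hYb)
  set c := ∫ x, Y x ∂μ
  have hYA : ∀ A, MeasurableSet[m₁] A → |∫ x in A, (Y x - c) ∂μ| ≤ 2 * b * α := by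
    intro A hA
    have hA0 : MeasurableSet[m0] A := hm₁ _ hA
    have h1A : Integrable (A.indicator fun _ => (1 : ℝ)) μ := (integrable_const 1).indicator hA0
    have key := abs_integral_mul_le_of_abs_setIntegral_le (β := α) hm₂ hY hYb
      (Z := fun x => A.indicator (fun _ => 1) x - μ.real A) (h1A.sub (integrable_const _))
      fun B hB => by
        rw [integral_sub h1A.integrableOn (integrable_const _).integrableOn,
          setIntegral_indicator hA0]
        simpa [Set.inter_comm, mul_comm] using hα A B hA hB
    have hprod : (fun x => Y x * (A.indicator (fun _ => 1) x - μ.real A))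
        = fun x => A.indicator Y x - μ.real A * Y x := by
      ext x
      by_cases hx : x ∈ A <;> simp [hx] <;> ring
    rwa [hprod, integral_sub (hYi.indicator hA0) (hYi.const_mul _), integral_indicator hA0,
      integral_const_mul, ← smul_eq_mul, ← setIntegral_const,
      ← integral_sub hYi.integrableOn (integrable_const _).integrableOn] at key
  calc |∫ x, X x * Y x ∂μ - (∫ x, X x ∂μ) * c|
      = |∫ x, X x * (Y x - c) ∂μ| := by
        simp_rw [mul_sub]
        rw [integral_sub (hYi.bdd_mul hXm (.of_forall hXa))
          ((integrable_const c).bdd_mul hXm (.of_forall hXa)), integral_mul_const]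
    _ ≤ 2 * a * (2 * b * α) :=
        abs_integral_mul_le_of_abs_setIntegral_le hm₁ hX hXa (hYi.sub (integrable_const c)) hYA
    _ = 4 * a * b * α := by ring

theorem abs_integral_mul_sub_trunc_le_of_mixing [IsProbabilityMeasure μ]
    (hm₁ : m₁ ≤ m0) (hm₂ : m₂ ≤ m0) {X Y : Ω → ℝ} {α M : ℝ} (hM : 0 < M)
    (hX : Measurable[m₁] X) (hY : Measurable[m₂] Y)
    (hX4 : Integrable (fun x => X x ^ 4) μ) (hY4 : Integrable (fun x => Y x ^ 4) μ)
    (hα : ∀ A B, MeasurableSet[m₁] A → MeasurableSet[m₂] B →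
      |μ.real (A ∩ B) - μ.real A * μ.real B| ≤ α) :
    |∫ x, X x * Y x ∂μ - (∫ x, trunc M (X x) ∂μ) * ∫ x, trunc M (Y x) ∂μ|
      ≤ 2 * (∫ x, X x ^ 4 ∂μ + ∫ x, Y x ^ 4 ∂μ) / M ^ 2 + 4 * M * M * α := by
  have hτ := (continuous_trunc M).measurable
  have hX' : Measurable[m₁] fun x => trunc M (X x) := hτ.comp hX
  have hY' : Measurable[m₂] fun x => trunc M (Y x) := hτ.comp hY
  have hcov := abs_integral_mul_sub_le_of_mixing hm₁ hm₂ hX'.stronglyMeasurable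
    hY'.stronglyMeasurable (fun x => abs_trunc_le hM.le (X x)) (fun x => abs_trunc_le hM.le (Y x))
    hα
  have hbound : Integrable (fun x => 2 * (X x ^ 4 + Y x ^ 4) / M ^ 2) μ :=
    ((hX4.add hY4).const_mul 2).div_const _
  have herr_le : ∀ x,
      ‖X x * Y x - trunc M (X x) * trunc M (Y x)‖ ≤ 2 * (X x ^ 4 + Y x ^ 4) / M ^ 2 := fun x => by
    rw [Real.norm_eq_abs, le_div_iff₀ (by positivity), mul_comm]
    exact sq_mul_abs_mul_sub_trunc_mul_trunc_le hM.le _ _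
  have herr : Integrable (fun x => X x * Y x - trunc M (X x) * trunc M (Y x)) μ :=
    hbound.mono' (((hX.mono hm₁ le_rfl).mul (hY.mono hm₂ le_rfl)).sub
      ((hX'.mono hm₁ le_rfl).mul (hY'.mono hm₂ le_rfl))).aestronglyMeasurable (.of_forall herr_le)
  have htrunc : Integrable (fun x => trunc M (X x) * trunc M (Y x)) μ :=
    .of_bound ((hX'.mono hm₁ le_rfl).mul (hY'.mono hm₂ le_rfl)).aestronglyMeasurable (M * M)
      (.of_forall fun x => by
        rw [Real.norm_eq_abs, abs_mul]
        exact mul_le_mul (abs_trunc_le hM.le _) (abs_trunc_le hM.le _) (abs_nonneg _) hM.le)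
  have herr_int : |∫ x, (X x * Y x - trunc M (X x) * trunc M (Y x)) ∂μ|
      ≤ 2 * (∫ x, X x ^ 4 ∂μ + ∫ x, Y x ^ 4 ∂μ) / M ^ 2 := by
    refine (norm_integral_le_of_norm_le hbound (.of_forall herr_le)).trans_eq ?_
    rw [integral_div, integral_const_mul, integral_add hX4 hY4]
  have hsplit : ∫ x, X x * Y x ∂μ = ∫ x, (X x * Y x - trunc M (X x) * trunc M (Y x)) ∂μ
      + ∫ x, trunc M (X x) * trunc M (Y x) ∂μ := by
    rw [← integral_add herr htrunc]
    simp only [sub_add_cancel]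
  rw [hsplit, add_sub_assoc]
  exact (abs_add_le _ _).trans (add_le_add herr_int hcov)

end Covariance

namespace DepNoise

variable {Ω : Type*} {U : ℕ → Ω → ℝ}

theorem pastSigma_le [MeasurableSpace Ω] (hU : ∀ i, Measurable (U i)) (k : ℕ) :
    pastSigma U k ≤ ‹MeasurableSpace Ω› :=
  iSup_le fun i => (hU i).comap_le

theorem futureSigma_le [MeasurableSpace Ω] (hU : ∀ i, Measurable (U i)) (m : ℕ) :
    futureSigma U m ≤ ‹MeasurableSpace Ω› :=
  iSup_le fun i => (hU (m + i)).comap_le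

theorem pastSigma_mono : Monotone (pastSigma U) := fun k i hki =>
  iSup_le fun t => le_iSup_of_le (⟨t, by omega⟩ : Fin (i + 1)) le_rfl

theorem measurable_pastSigma (k : ℕ) : Measurable[pastSigma U k] (U k) :=
  measurable_iff_comap_le.mpr
    (le_iSup (fun t : Fin (k + 1) => MeasurableSpace.comap (U t) inferInstance) (Fin.last k))

theorem measurable_futureSigma (m : ℕ) : Measurable[futureSigma U m] (U m) :=
  measurable_iff_comap_le.mpr
    (le_iSup (fun t : ℕ => MeasurableSpace.comap (U (m + t)) inferInstance) 0)

theorem identDistrib_of_stationary [MeasureSpace Ω] (hU : ∀ i, Measurable (U i))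
    (hStat : ∀ k n : ℕ,
      Measure.map (fun ω => fun i : Fin (n + 1) => U (k + i) ω) ℙ
        = Measure.map (fun ω => fun i : Fin (n + 1) => U i ω) ℙ) (n : ℕ) :
    IdentDistrib (U n) (U 0) ℙ ℙ :=
  (⟨(measurable_pi_lambda _ fun _ => hU _).aemeasurable,
    (measurable_pi_lambda _ fun _ => hU _).aemeasurable, hStat n 0⟩ :
      IdentDistrib (fun ω (i : Fin 1) => U (n + i) ω) (fun ω (i : Fin 1) => U i ω) ℙ ℙ).comp
    (measurable_pi_apply 0)

theorem abs_setIntegral_mul_le_of_mixing [MeasureSpace Ω] [IsProbabilityMeasure (ℙ : Measure Ω)]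
    (hU : ∀ i, Measurable (U i)) (hId : ∀ n, IdentDistrib (U n) (U 0) ℙ ℙ)
    (hSymm : IdentDistrib (U 0) (fun ω => -U 0 ω) ℙ ℙ) (h4 : Integrable (fun ω => U 0 ω ^ 4) ℙ)
    {i j : ℕ} {α M : ℝ} (hM : 0 < M)
    (hMix : ∀ A B, MeasurableSet[pastSigma U i] A → MeasurableSet[futureSigma U j] B →
      |(ℙ : Measure Ω).real (A ∩ B) - (ℙ : Measure Ω).real A * (ℙ : Measure Ω).real B| ≤ α)
    {B : Set Ω} (hB : MeasurableSet[pastSigma U i] B) :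
    |∫ ω in B, U i ω * U j ω| ≤ 4 * (∫ ω, U 0 ω ^ 4) / M ^ 2 + 4 * M * M * α := by
  have hB0 : MeasurableSet B := pastSigma_le hU i _ hB
  have hpow : Measurable fun x : ℝ => x ^ 4 := by fun_prop
  have h4' : ∀ n, Integrable (fun ω => U n ω ^ 4) ℙ ∧ ∫ ω, U n ω ^ 4 = ∫ ω, U 0 ω ^ 4 := fun n =>
    ⟨((hId n).comp hpow).integrable_iff.mpr h4, ((hId n).comp hpow).integral_eq⟩
  have hind : (fun ω => B.indicator (U i) ω ^ 4) = B.indicator fun ω => U i ω ^ 4 := by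
    ext ω
    by_cases hω : ω ∈ B <;> simp [hω]
  have hX4 : Integrable (fun ω => B.indicator (U i) ω ^ 4) ℙ := hind ▸ (h4' i).1.indicator hB0
  have hX4_le : ∫ ω, B.indicator (U i) ω ^ 4 ≤ ∫ ω, U 0 ω ^ 4 := by
    rw [hind, integral_indicator hB0, ← (h4' i).2]
    exact setIntegral_le_integral (h4' i).1 (.of_forall fun ω => by positivity)
  have hτY : ∫ ω, trunc M (U j ω) = 0 :=
    ((hId j).comp (continuous_trunc M).measurable).integral_eq.trans
      (integral_comp_eq_zero_of_identDistrib_neg hSymm (continuous_trunc M).measurable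
        (trunc_neg hM.le))
  have hcov := abs_integral_mul_sub_trunc_le_of_mixing (pastSigma_le hU i) (futureSigma_le hU j)
    hM ((measurable_pastSigma i).indicator hB) (measurable_futureSigma j) hX4 (h4' j).1 hMix
  rw [hτY, mul_zero, sub_zero, (h4' j).2] at hcov
  have hXY : ∫ ω, B.indicator (U i) ω * U j ω = ∫ ω in B, U i ω * U j ω := by
    simp_rw [← Set.indicator_mul_left]
    exact integral_indicator hB0
  rw [hXY] at hcov
  refine hcov.trans ?_
  gcongr ?_ / _ + _
  linarith

theorem abs_setIntegral_mul_le_of_polynomial_mixing [MeasureSpace Ω]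
    [IsProbabilityMeasure (ℙ : Measure Ω)] (hU : ∀ i, Measurable (U i))
    (hId : ∀ n, IdentDistrib (U n) (U 0) ℙ ℙ) (hSymm : IdentDistrib (U 0) (fun ω => -U 0 ω) ℙ ℙ)
    (h4 : Integrable (fun ω => U 0 ω ^ 4) ℙ) {C v : ℝ} {i h : ℕ} (hh : 0 < h)
    (hMix : ∀ A B, MeasurableSet[pastSigma U i] A → MeasurableSet[futureSigma U (i + h)] B →
      |(ℙ : Measure Ω).real (A ∩ B) - (ℙ : Measure Ω).real A * (ℙ : Measure Ω).real B|
        ≤ C * (h : ℝ) ^ (-v))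
    {B : Set Ω} (hB : MeasurableSet[pastSigma U i] B) :
    |∫ ω in B, U i ω * U (i + h) ω| ≤ 4 * ((∫ ω, U 0 ω ^ 4) + C) * (h : ℝ) ^ (-(v / 2)) := by
  have hh0 : (0 : ℝ) < h := Nat.cast_pos.mpr hh
  have hM := Real.rpow_pos_of_pos hh0 (v / 4)
  -- truncating at `M = h ^ (v / 4)` balances the two error terms
  refine (abs_setIntegral_mul_le_of_mixing hU hId hSymm h4 hM hMix hB).trans_eq ?_
  have hpow : ∀ n : ℕ, (h : ℝ) ^ (-(v / 4 * n)) = (((h : ℝ) ^ (v / 4)) ^ n)⁻¹ := fun n => by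
    rw [Real.rpow_neg hh0.le, ← Real.rpow_natCast, ← Real.rpow_mul hh0.le]
  rw [show -v = -(v / 4 * (4 : ℕ)) by push_cast; ring,
    show -(v / 2) = -(v / 4 * (2 : ℕ)) by push_cast; ring, hpow, hpow]
  field_simp

theorem condexp_product_decay_general
    {Ω : Type*} [MeasureSpace Ω] [IsProbabilityMeasure (ℙ : Measure Ω)]
    (U : ℕ → Ω → ℝ)
    (hMeas : ∀ i, Measurable (U i))
    (hStat : ∀ k n : ℕ,
      Measure.map (fun ω => fun i : Fin (n + 1) => U (k + i) ω) ℙ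
        = Measure.map (fun ω => fun i : Fin (n + 1) => U i ω) ℙ)
    (hSymm : Measure.map (U 0) ℙ = Measure.map (fun ω => -U 0 ω) ℙ)
    (hMom : ∀ p : ℕ, 1 ≤ p → Integrable (fun ω => |U 0 ω| ^ p) ℙ)
    (C v : ℝ)
    (hMix : ∀ k h : ℕ, 1 ≤ h → ∀ A B : Set Ω,
      MeasurableSet[pastSigma U k] A → MeasurableSet[futureSigma U (k + h)] B →
      |(ℙ (A ∩ B)).toReal - (ℙ A).toReal * (ℙ B).toReal| ≤ C * (h : ℝ) ^ (-v)) :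
    ∀ w : ℝ, 0 < w → w < v → ∃ Cw > (0 : ℝ), ∀ k i j : ℕ, k ≤ i → i < j →
      ∫ ω, |(ℙ[fun ω' => U i ω' * U j ω' | pastSigma U k]) ω| ∂ℙ
        ≤ Cw * ((j : ℝ) - (i : ℝ)) ^ (-(w / 2)) := by
  intro w _ hwv
  have h4 : Integrable (fun ω => U 0 ω ^ 4) ℙ := by
    simpa only [Even.pow_abs (by decide : Even 4)] using hMom 4 (by norm_num)
  have hSymm' : IdentDistrib (U 0) (fun ω => -U 0 ω) ℙ ℙ :=
    ⟨(hMeas 0).aemeasurable, (hMeas 0).neg.aemeasurable, hSymm⟩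
  set K := ∫ ω, U 0 ω ^ 4
  have hK : 0 ≤ K := integral_nonneg fun ω => by positivity
  refine ⟨8 * (K + |C|) + 1, by positivity, fun k i j hki hij => ?_⟩
  obtain ⟨h, hh, rfl⟩ : ∃ h, 0 < h ∧ j = i + h := ⟨j - i, by omega, by omega⟩
  have hvw : (h : ℝ) ^ (-(v / 2)) ≤ (h : ℝ) ^ (-(w / 2)) :=
    Real.rpow_le_rpow_of_exponent_le (Nat.one_le_cast.mpr hh) (by linarith)
  have hv0 : 0 ≤ (h : ℝ) ^ (-(v / 2)) := Real.rpow_nonneg h.cast_nonneg _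
  calc ∫ ω, |(ℙ[fun ω' => U i ω' * U (i + h) ω' | pastSigma U k]) ω|
      ≤ 2 * (4 * (K + C) * (h : ℝ) ^ (-(v / 2))) :=
        integral_abs_condExp_le_of_abs_setIntegral_le (pastSigma_le hMeas k) fun B hB =>
          abs_setIntegral_mul_le_of_polynomial_mixing hMeas (identDistrib_of_stationary hMeas hStat)
            hSymm' h4 hh (hMix i h hh) (pastSigma_mono hki _ hB)
    _ ≤ (8 * (K + |C|) + 1) * (h : ℝ) ^ (-(w / 2)) := by
        nlinarith [mul_le_mul_of_nonneg_left hvw (by positivity : 0 ≤ K + |C|),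
          mul_le_mul_of_nonneg_right (le_abs_self C) hv0, hv0.trans hvw]
    _ = (8 * (K + |C|) + 1) * (((i + h : ℕ) : ℝ) - i) ^ (-(w / 2)) := by
        rw [Nat.cast_add, add_sub_cancel_left]

/-- for every `0 < w < v` there is `C_w > 0` such that for all `k ≤ i < j`,
`E[|E[U_i U_j | 𝓕_k]|] ≤ C_w (j − i)^(−w/2)`. -/
theorem condexp_product_decay
    {Ω : Type*} [MeasureSpace Ω] [IsProbabilityMeasure (ℙ : Measure Ω)]
    (U : ℕ → Ω → ℝ)
    (hMeas : ∀ i, Measurable (U i))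
    (hStat : ∀ k n : ℕ,
      Measure.map (fun ω => fun i : Fin (n + 1) => U (k + i) ω) ℙ
        = Measure.map (fun ω => fun i : Fin (n + 1) => U i ω) ℙ)
    (hSymm : Measure.map (U 0) ℙ = Measure.map (fun ω => -U 0 ω) ℙ)
    (hMom : ∀ p : ℕ, 1 ≤ p → Integrable (fun ω => |U 0 ω| ^ p) ℙ)
    (C v : ℝ) (hC : 0 < C)
    (hMix : ∀ k h : ℕ, 1 ≤ h → ∀ A B : Set Ω,
      MeasurableSet[pastSigma U k] A → MeasurableSet[futureSigma U (k + h)] B →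
      |(ℙ (A ∩ B)).toReal - (ℙ A).toReal * (ℙ B).toReal| ≤ C * (h : ℝ) ^ (-v))
    (hv : 0 < v) :
    ∀ w : ℝ, 0 < w → w < v → ∃ Cw > (0 : ℝ), ∀ k i j : ℕ, k ≤ i → i < j →
      ∫ ω, |(ℙ[fun ω' => U i ω' * U j ω' | pastSigma U k]) ω| ∂ℙ
        ≤ Cw * ((j : ℝ) - (i : ℝ)) ^ (-(w / 2)) :=
  condexp_product_decay_general U hMeas hStat hSymm hMom C v hMix

end DepNoise
end

section
/- Let f : [0,1] → [0,1] be strictly increasing with f(0) = 0 and f(1) = 1, differentiable with Lipschitz-continuous derivative f', and set t^n_i := f(i/n) for 0 ≤ i ≤ n. Then, as n → ∞, sup over 1 ≤ m ≤ M_n of | n^{−1/2} · E[( Σ_{i=(2m−2)k_n}^{(2m−1)k_n} (W_{t^n_{i+k_n}} − W_{t^n_i}) )²] − (2c³/3) · f'((2m−2)k_n/n) | tends to 0. -/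
/-!
With the covariance `min s t`, the increments of `W` over `[u, v]` and `[u', v']` have covariance
`|[u, v] ∩ [u', v']|`. The block `i = a, …, a + k` (`a = (2m - 2)k_n`) uses the windows
`[t_i, t_{i+k}]` on a monotone grid, so its second moment is
`∑_{i,j ≤ k} (f((a + min i j + k)/n) - f((a + max i j)/n))`. Since `f'` is Lipschitz, each term is
`f'(a/n) (k + min i j - max i j)/n` up to a relative error `O(k/n)`, and
`∑_{i,j ≤ k} (k + min i j - max i j) = k(k+1)(2k+1)/3 ~ 2c³ n^{3/2}/3`. All error terms depend on
`m` only through the bound on `f'`, which gives uniformity in `m`.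
-/

open MeasureTheory ProbabilityTheory Filter Finset
open scoped ProbabilityTheory ENNReal NNReal BigOperators

namespace DepNoise

/-- `k_n := ⌊c√n⌋`. -/
noncomputable def kfloor (c : ℝ) (n : ℕ) : ℕ := Nat.floor (c * Real.sqrt n)

/-- `M_n := ⌊√n / (2c)⌋`. -/
noncomputable def Mn (c : ℝ) (n : ℕ) : ℕ := Nat.floor (Real.sqrt n / (2 * c))

open scoped Topology

section SecondMoment

variable {Ω : Type*} [MeasurableSpace Ω] {μ : Measure Ω}

lemma integral_sum_sq_eq_sum_sum_integral_mul {ι : Type*} (s : Finset ι) {X : ι → Ω → ℝ}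
    (hX : ∀ i ∈ s, MemLp (X i) 2 μ) :
    ∫ ω, (∑ i ∈ s, X i ω) ^ 2 ∂μ = ∑ i ∈ s, ∑ j ∈ s, ∫ ω, X i ω * X j ω ∂μ := by
  have hint : ∀ i ∈ s, ∀ j ∈ s, Integrable (fun ω => X i ω * X j ω) μ :=
    fun i hi j hj => (hX i hi).integrable_mul (hX j hj)
  simp_rw [sq, Finset.sum_mul_sum]
  rw [integral_finsetSum _ fun i hi => integrable_finsetSum _ (hint i hi)]
  exact Finset.sum_congr rfl fun i hi => integral_finsetSum _ (hint i hi)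

variable {W : ℝ → Ω → ℝ}

lemma integral_sub_mul_sub_of_cov_eq_min (hW2 : ∀ t : ℝ, 0 ≤ t → MemLp (W t) 2 μ)
    (hWcov : ∀ s t : ℝ, 0 ≤ s → 0 ≤ t → ∫ ω, W s ω * W t ω ∂μ = min s t)
    {s t u v : ℝ} (hs : 0 ≤ s) (ht : 0 ≤ t) (hu : 0 ≤ u) (hv : 0 ≤ v) :
    ∫ ω, (W s ω - W t ω) * (W u ω - W v ω) ∂μ = min s u - min s v - min t u + min t v := by
  have hint : ∀ {x y : ℝ}, 0 ≤ x → 0 ≤ y → Integrable (fun ω => W x ω * W y ω) μ :=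
    fun hx hy => (hW2 _ hx).integrable_mul (hW2 _ hy)
  have hexpand : (fun ω => (W s ω - W t ω) * (W u ω - W v ω))
      = fun ω => W s ω * W u ω - W s ω * W v ω - W t ω * W u ω + W t ω * W v ω := by
    funext ω; ring
  rw [hexpand, integral_add ?_ (hint ht hv), integral_sub ?_ (hint ht hu),
    integral_sub (hint hs hu) (hint hs hv), hWcov s u hs hu, hWcov s v hs hv, hWcov t u ht hu,
    hWcov t v ht hv]
  · exact (hint hs hu).sub (hint hs hv)
  · exact ((hint hs hu).sub (hint hs hv)).sub (hint ht hu)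

lemma integral_sq_sum_increments_eq (hW2 : ∀ t : ℝ, 0 ≤ t → MemLp (W t) 2 μ)
    (hWcov : ∀ s t : ℝ, 0 ≤ s → 0 ≤ t → ∫ ω, W s ω * W t ω ∂μ = min s t)
    {s : ℕ → ℝ} {k : ℕ} (hs0 : 0 ≤ s 0) (hs : MonotoneOn s (Set.Iic (2 * k))) :
    ∫ ω, (∑ i ∈ range (k + 1), (W (s (i + k)) ω - W (s i) ω)) ^ 2 ∂μ
      = ∑ i ∈ range (k + 1), ∑ j ∈ range (k + 1), (s (min i j + k) - s (max i j)) := by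
  have hle : ∀ i ∈ range (k + 1), i ≤ 2 * k ∧ i + k ≤ 2 * k := fun i hi => by
    have := mem_range.1 hi
    omega
  have hnonneg : ∀ i ≤ 2 * k, 0 ≤ s i :=
    fun i hi => hs0.trans (hs (Set.mem_Iic.2 (Nat.zero_le _)) hi (Nat.zero_le i))
  rw [integral_sum_sq_eq_sum_sum_integral_mul (X := fun i ω => W (s (i + k)) ω - W (s i) ω) _
    fun i hi => (hW2 _ (hnonneg _ (hle i hi).2)).sub (hW2 _ (hnonneg _ (hle i hi).1))]
  refine sum_congr rfl fun i hi => sum_congr rfl fun j hj => ?_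
  obtain ⟨hi, hik⟩ := hle i hi
  obtain ⟨hj, hjk⟩ := hle j hj
  rw [integral_sub_mul_sub_of_cov_eq_min hW2 hWcov (hnonneg _ hik) (hnonneg _ hi)
      (hnonneg _ hjk) (hnonneg _ hj), ← hs.map_min hik hjk, ← hs.map_min hik hj,
    ← hs.map_min hi hjk, ← hs.map_min hi hj]
  rcases le_total i j with h | h
  · rw [min_eq_left h, max_eq_right h, show min (i + k) (j + k) = i + k by omega,
      show min (i + k) j = j by omega, show min i (j + k) = i by omega]
    ring
  · rw [min_eq_right h, max_eq_left h, show min (i + k) (j + k) = j + k by omega,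
      show min (i + k) j = j by omega, show min i (j + k) = i by omega]
    ring

end SecondMoment

lemma sum_range_id_cast (N : ℕ) : ∑ i ∈ range N, (i : ℝ) = N * (N - 1) / 2 := by
  induction N with
  | zero => simp
  | succ N ih => rw [sum_range_succ, ih]; push_cast; ring

lemma sum_range_sum_range_min (N : ℕ) :
    ∑ i ∈ range N, ∑ j ∈ range N, min (i : ℝ) j = (N - 1) * N * (2 * N - 1) / 6 := by
  induction N with
  | zero => simp
  | succ N ih =>
    have hrow : ∑ j ∈ range N, min (N : ℝ) j = ∑ j ∈ range N, (j : ℝ) :=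
      sum_congr rfl fun j hj => min_eq_right (by exact_mod_cast (mem_range.1 hj).le)
    have hcol : ∑ i ∈ range N, min (i : ℝ) N = ∑ i ∈ range N, (i : ℝ) :=
      sum_congr rfl fun i hi => min_eq_left (by exact_mod_cast (mem_range.1 hi).le)
    simp only [sum_range_succ, sum_add_distrib, ih, hrow, hcol, min_self, sum_range_id_cast]
    push_cast
    ring

lemma sum_range_sum_range_overlap (k : ℕ) :
    ∑ i ∈ range (k + 1), ∑ j ∈ range (k + 1), ((k : ℝ) + min (i : ℝ) j - max (i : ℝ) j)
      = k * (k + 1) * (2 * k + 1) / 3 := by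
  have hmax : ∀ i j : ℕ, (k : ℝ) + min (i : ℝ) j - max (i : ℝ) j
      = 2 * min (i : ℝ) j + ((k - i) - j) := fun i j => by linarith [min_add_max (i : ℝ) j]
  simp only [hmax, sum_add_distrib, sum_sub_distrib, ← mul_sum, sum_range_sum_range_min,
    sum_const, card_range, nsmul_eq_mul, sum_range_id_cast]
  push_cast
  ring

lemma abs_sub_sub_mul_le_of_lipschitzOnWith {f f' : ℝ → ℝ} {s : Set ℝ} {L : ℝ≥0}
    {r x y δ : ℝ} (hs : Convex ℝ s) (hf : ∀ z ∈ s, HasDerivAt f (f' z) z)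
    (hlip : LipschitzOnWith L f' s) (hr : r ∈ s) (hx : x ∈ s) (hy : y ∈ s)
    (hxr : |x - r| ≤ δ) (hyr : |y - r| ≤ δ) :
    |f x - f y - f' r * (x - y)| ≤ L * δ * |x - y| := by
  set t := s ∩ Metric.closedBall r δ
  have hderiv : ∀ z ∈ t, HasDerivWithinAt (fun z => f z - f' r * z) (f' z - f' r) t z :=
    fun z hz => (((hf z hz.1).sub ((hasDerivAt_id' z).const_mul (f' r))).congr_deriv
      (by ring)).hasDerivWithinAt
  have hbound : ∀ z ∈ t, ‖f' z - f' r‖ ≤ L * δ := fun z hz => by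
    rw [← dist_eq_norm]
    exact (hlip.dist_le_mul z hz.1 r hr).trans
      (mul_le_mul_of_nonneg_left (Metric.mem_closedBall.1 hz.2) L.coe_nonneg)
  have hmem : ∀ {z}, z ∈ s → |z - r| ≤ δ → z ∈ t := fun hz hzr =>
    ⟨hz, Metric.mem_closedBall.2 (by rwa [Real.dist_eq])⟩
  have := hs.inter (convex_closedBall r δ) |>.norm_image_sub_le_of_norm_hasDerivWithin_le
    hderiv hbound (hmem hy hyr) (hmem hx hxr)
  simp only [Real.norm_eq_abs] at this
  convert this using 2
  ring

/-- `∑_{i,j ≤ k} |[i, i+k] ∩ [j, j+k]| / n`, see `sum_range_sum_range_overlap`. -/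
noncomputable def overlapSum (k n : ℕ) : ℝ := k * (k + 1) * (2 * k + 1) / (3 * n)

lemma abs_sum_overlap_sub_deriv_mul_le {f f' : ℝ → ℝ} {L : ℝ≥0}
    (hf : ∀ x ∈ Set.Icc (0 : ℝ) 1, HasDerivAt f (f' x) x)
    (hlip : LipschitzOnWith L f' (Set.Icc 0 1)) {n k a : ℕ} (hfit : a + 2 * k ≤ n) :
    |∑ i ∈ range (k + 1), ∑ j ∈ range (k + 1),
        (f (((a + (min i j + k) : ℕ) : ℝ) / n) - f (((a + max i j : ℕ) : ℝ) / n))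
      - f' ((a : ℝ) / n) * overlapSum k n| ≤ L * (2 * k / n) * overlapSum k n := by
  set x : ℕ → ℝ := fun j => ((a + j : ℕ) : ℝ) / n with hx
  have hx0 : (a : ℝ) / n = x 0 := by simp [hx]
  have hx_mem : ∀ j ≤ 2 * k, x j ∈ Set.Icc (0 : ℝ) 1 := fun j hj =>
    ⟨by positivity, div_le_one_of_le₀ (by exact_mod_cast (by omega : a + j ≤ n)) n.cast_nonneg⟩
  have hx_near : ∀ j ≤ 2 * k, |x j - x 0| ≤ 2 * k / n := fun j hj => by
    have hj' : (j : ℝ) ≤ 2 * k := by exact_mod_cast hj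
    rw [show x j - x 0 = j / n by simp [hx]; ring, abs_of_nonneg (by positivity)]
    gcongr
  have hgap : ∀ i j : ℕ,
      x (min i j + k) - x (max i j) = ((k : ℝ) + min (i : ℝ) j - max (i : ℝ) j) / n :=
    fun i j => by simp only [hx]; push_cast; ring
  have hterm : ∀ i ∈ range (k + 1), ∀ j ∈ range (k + 1),
      |f (x (min i j + k)) - f (x (max i j)) - f' (x 0) * (x (min i j + k) - x (max i j))|
        ≤ L * (2 * k / n) * (x (min i j + k) - x (max i j)) := fun i hi j hj => by
    have hi' := mem_range.1 hi
    have hj' := mem_range.1 hj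
    have hgap_nonneg : 0 ≤ x (min i j + k) - x (max i j) := by
      rw [hgap]
      have : (max i j : ℝ) ≤ min i j + k := by exact_mod_cast (by omega : max i j ≤ min i j + k)
      push_cast at this
      exact div_nonneg (by linarith) n.cast_nonneg
    have := abs_sub_sub_mul_le_of_lipschitzOnWith (convex_Icc 0 1) hf hlip
      (hx_mem 0 (Nat.zero_le _)) (hx_mem (min i j + k) (by omega)) (hx_mem (max i j) (by omega))
      (hx_near (min i j + k) (by omega)) (hx_near (max i j) (by omega))
    rwa [abs_of_nonneg hgap_nonneg] at this
  have hsum : ∑ i ∈ range (k + 1), ∑ j ∈ range (k + 1), (x (min i j + k) - x (max i j))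
      = overlapSum k n := by
    simp only [hgap, ← sum_div, sum_range_sum_range_overlap, overlapSum]
    ring
  rw [hx0, ← hsum]
  calc |∑ i ∈ range (k + 1), ∑ j ∈ range (k + 1), (f (x (min i j + k)) - f (x (max i j)))
        - f' (x 0) * ∑ i ∈ range (k + 1), ∑ j ∈ range (k + 1), (x (min i j + k) - x (max i j))|
      = |∑ i ∈ range (k + 1), ∑ j ∈ range (k + 1),
          (f (x (min i j + k)) - f (x (max i j))
            - f' (x 0) * (x (min i j + k) - x (max i j)))| := by
        rw [mul_sum, ← sum_sub_distrib]
        exact congrArg _ (sum_congr rfl fun i _ => by rw [mul_sum, ← sum_sub_distrib])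
    _ ≤ ∑ i ∈ range (k + 1), ∑ j ∈ range (k + 1),
          |f (x (min i j + k)) - f (x (max i j)) - f' (x 0) * (x (min i j + k) - x (max i j))| :=
        (abs_sum_le_sum_abs _ _).trans (sum_le_sum fun i _ => abs_sum_le_sum_abs _ _)
    _ ≤ _ := by
        simp only [mul_sum]
        exact sum_le_sum fun i hi => sum_le_sum fun j hj => hterm i hi j hj

lemma tendsto_inv_sqrt_natCast_atTop : Tendsto (fun n : ℕ => (√(n : ℝ))⁻¹) atTop (𝓝 0) :=
  tendsto_inv_atTop_zero.comp (Real.tendsto_sqrt_atTop.comp tendsto_natCast_atTop_atTop)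

lemma tendsto_kfloor_div_sqrt {c : ℝ} (hc : 0 ≤ c) :
    Tendsto (fun n : ℕ => (kfloor c n : ℝ) / √n) atTop (𝓝 c) := by
  refine tendsto_of_tendsto_of_tendsto_of_le_of_le' (g := fun n : ℕ => c - (√(n : ℝ))⁻¹)
    (by simpa using (tendsto_const_nhds (x := c)).sub tendsto_inv_sqrt_natCast_atTop)
    tendsto_const_nhds ?_ ?_
  all_goals
    filter_upwards [eventually_gt_atTop 0] with n hn
    have hs : 0 < √(n : ℝ) := Real.sqrt_pos.2 (by exact_mod_cast hn)
  · rw [le_div_iff₀ hs, sub_mul, inv_mul_cancel₀ hs.ne']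
    have : c * √n < kfloor c n + 1 := Nat.lt_floor_add_one _
    linarith
  · rw [div_le_iff₀ hs]
    exact Nat.floor_le (by positivity)

lemma tendsto_overlapSum_div_sqrt {c : ℝ} (hc : 0 ≤ c) :
    Tendsto (fun n : ℕ => overlapSum (kfloor c n) n / √n) atTop (𝓝 (2 * c ^ 3 / 3)) := by
  have hρ := tendsto_kfloor_div_sqrt hc
  have hε := tendsto_inv_sqrt_natCast_atTop
  have hlim := ((hρ.mul (hρ.add hε)).mul ((hρ.const_mul 2).add hε)).div_const 3
  rw [add_zero, add_zero, show c * c * (2 * c) / 3 = 2 * c ^ 3 / 3 by ring] at hlim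
  refine hlim.congr' ?_
  filter_upwards [eventually_gt_atTop 0] with n hn
  have hs : √(n : ℝ) ≠ 0 := (Real.sqrt_pos.2 (by exact_mod_cast hn)).ne'
  simp only [overlapSum]
  field_simp
  rw [Real.sq_sqrt n.cast_nonneg]

lemma tendsto_preavg_error {c : ℝ} (hc : 0 ≤ c) (L B : ℝ) :
    Tendsto (fun n : ℕ => L * (2 * kfloor c n / n) * (overlapSum (kfloor c n) n / √n)
      + B * |overlapSum (kfloor c n) n / √n - 2 * c ^ 3 / 3|) atTop (𝓝 0) := by
  have hkn : Tendsto (fun n : ℕ => 2 * (kfloor c n : ℝ) / n) atTop (𝓝 0) := by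
    have := ((tendsto_kfloor_div_sqrt hc).mul tendsto_inv_sqrt_natCast_atTop).const_mul 2
    rw [mul_zero, mul_zero] at this
    refine this.congr fun n => ?_
    rw [← div_eq_mul_inv, div_div, Real.mul_self_sqrt n.cast_nonneg, mul_div_assoc]
  have hG := tendsto_overlapSum_div_sqrt hc
  have hdev := (hG.sub_const (2 * c ^ 3 / 3)).abs
  rw [sub_self, abs_zero] at hdev
  simpa using ((hkn.const_mul L).mul hG).add (hdev.const_mul B)

lemma two_mul_mul_kfloor_le {c : ℝ} (hc : 0 < c) {n m : ℕ} (hm : m ≤ Mn c n) :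
    2 * m * kfloor c n ≤ n := by
  have hm' : (m : ℝ) ≤ √n / (2 * c) := (Nat.cast_le.2 hm).trans (Nat.floor_le (by positivity))
  have hk : (kfloor c n : ℝ) ≤ c * √n := Nat.floor_le (by positivity)
  have : (2 * m * kfloor c n : ℝ) ≤ n :=
    calc (2 * m * kfloor c n : ℝ) ≤ 2 * (√n / (2 * c)) * (c * √n) := by gcongr
      _ = n := by field_simp; exact Real.sq_sqrt n.cast_nonneg
  exact_mod_cast this

lemma abs_preavg_second_moment_sub_le {Ω : Type*} [MeasurableSpace Ω] {μ : Measure Ω}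
    {W : ℝ → Ω → ℝ} (hW2 : ∀ t : ℝ, 0 ≤ t → MemLp (W t) 2 μ)
    (hWcov : ∀ s t : ℝ, 0 ≤ s → 0 ≤ t → ∫ ω, W s ω * W t ω ∂μ = min s t)
    {f f' : ℝ → ℝ} (hmono : MonotoneOn f (Set.Icc 0 1)) (hf0 : 0 ≤ f 0)
    (hderiv : ∀ x ∈ Set.Icc (0 : ℝ) 1, HasDerivAt f (f' x) x)
    {L : ℝ≥0} (hlip : LipschitzOnWith L f' (Set.Icc 0 1))
    {B : ℝ} (hB : ∀ x ∈ Set.Icc (0 : ℝ) 1, ‖f' x‖ ≤ B) (κ : ℝ) {n k a : ℕ}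
    (hfit : a + 2 * k ≤ n) :
    |(n : ℝ) ^ (-((1 : ℝ) / 2)) *
        ∫ ω, (∑ i ∈ Icc a (a + k),
          (W (f (((i + k : ℕ) : ℝ) / n)) ω - W (f ((i : ℝ) / n)) ω)) ^ 2 ∂μ
      - κ * f' ((a : ℝ) / n)|
      ≤ L * (2 * k / n) * (overlapSum k n / √n) + B * |overlapSum k n / √n - κ| := by
  set s : ℕ → ℝ := fun j => f (((a + j : ℕ) : ℝ) / n) with hs_def
  have hmem : ∀ j ≤ 2 * k, ((a + j : ℕ) : ℝ) / n ∈ Set.Icc (0 : ℝ) 1 := fun j hj =>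
    ⟨by positivity, div_le_one_of_le₀ (by exact_mod_cast (by omega : a + j ≤ n)) n.cast_nonneg⟩
  have hs : MonotoneOn s (Set.Iic (2 * k)) := fun i hi j hj hij =>
    hmono (hmem i hi) (hmem j hj) (by gcongr)
  have ha := hmem 0 (Nat.zero_le _)
  have hs0 : 0 ≤ s 0 := hf0.trans (hmono (Set.left_mem_Icc.2 zero_le_one) ha ha.1)
  have hreindex : ∀ ω,
      ∑ i ∈ Icc a (a + k), (W (f (((i + k : ℕ) : ℝ) / n)) ω - W (f ((i : ℝ) / n)) ω)
        = ∑ i ∈ range (k + 1), (W (s (i + k)) ω - W (s i) ω) := fun ω => by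
    rw [← Ico_add_one_right_eq_Icc, sum_Ico_eq_sum_range, show a + k + 1 - a = k + 1 by omega]
    simp only [hs_def, add_assoc]
  have hP : |f' (a / n)| ≤ B := (Real.norm_eq_abs _).symm.trans_le (hB _ (by simpa using ha))
  simp only [hreindex]
  rw [integral_sq_sum_increments_eq hW2 hWcov hs0 hs, Real.rpow_neg n.cast_nonneg,
    ← Real.sqrt_eq_rpow]
  set T := ∑ i ∈ range (k + 1), ∑ j ∈ range (k + 1), (s (min i j + k) - s (max i j))
  set G := overlapSum k n
  calc |(√(n : ℝ))⁻¹ * T - κ * f' (a / n)|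
      = |(√(n : ℝ))⁻¹ * (T - f' (a / n) * G) + f' (a / n) * (G / √n - κ)| := by ring_nf
    _ ≤ (√(n : ℝ))⁻¹ * (L * (2 * k / n) * G) + B * |G / √n - κ| := by
        refine (abs_add_le _ _).trans (add_le_add ?_ ?_) <;> rw [abs_mul]
        · rw [abs_of_nonneg (by positivity)]
          exact mul_le_mul_of_nonneg_left (abs_sum_overlap_sub_deriv_mul_le hderiv hlip hfit)
            (by positivity)
        · exact mul_le_mul_of_nonneg_right hP (abs_nonneg _)
    _ = L * (2 * k / n) * (G / √n) + B * |G / √n - κ| := by ring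

theorem brownian_preavg_second_moment_irregular_general
    {Ω : Type*} [MeasureSpace Ω]
    (W : ℝ → Ω → ℝ)
    (hW2 : ∀ t : ℝ, 0 ≤ t → MemLp (W t) 2 ℙ)
    (hWcov : ∀ s t : ℝ, 0 ≤ s → 0 ≤ t → ∫ ω, W s ω * W t ω ∂ℙ = min s t)
    (c : ℝ) (hc : 0 < c)
    (f f' : ℝ → ℝ)
    (hmono : StrictMonoOn f (Set.Icc 0 1))
    (hf0 : f 0 = 0)
    (hderiv : ∀ x ∈ Set.Icc (0 : ℝ) 1, HasDerivAt f (f' x) x)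
    (L : NNReal) (hlip : LipschitzOnWith L f' (Set.Icc 0 1)) :
    ∀ ε : ℝ, 0 < ε → ∃ N : ℕ, ∀ n ≥ N, ∀ m : ℕ, 1 ≤ m → m ≤ Mn c n →
      |(n : ℝ) ^ (-((1 : ℝ) / 2)) *
          ∫ ω, (∑ i ∈ Finset.Icc ((2 * m - 2) * kfloor c n) ((2 * m - 1) * kfloor c n),
              (W (f (((i + kfloor c n : ℕ) : ℝ) / (n : ℝ))) ω
                - W (f ((i : ℝ) / (n : ℝ))) ω)) ^ 2 ∂ℙ
        - (2 * c ^ 3 / 3) * f' ((((2 * m - 2) * kfloor c n : ℕ) : ℝ) / (n : ℝ))| < ε := by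
  intro ε hε
  obtain ⟨B, hB⟩ := isCompact_Icc.exists_bound_of_continuousOn hlip.continuousOn
  obtain ⟨N, hN⟩ := eventually_atTop.1
    ((tendsto_order.1 (tendsto_preavg_error hc.le L B)).2 ε hε)
  refine ⟨N, fun n hn m hm1 hmM => ?_⟩
  obtain ⟨m, rfl⟩ : ∃ m', m = m' + 1 := ⟨m - 1, by omega⟩
  have hfit : 2 * m * kfloor c n + 2 * kfloor c n ≤ n := by
    have := two_mul_mul_kfloor_le hc hmM
    linarith
  rw [show 2 * (m + 1) - 2 = 2 * m by omega, show 2 * (m + 1) - 1 = 2 * m + 1 by omega,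
    add_one_mul]
  exact (abs_preavg_second_moment_sub_le hW2 hWcov hmono.monotoneOn hf0.ge hderiv hlip hB _
    hfit).trans_lt (hN n hn)

/-- time-changed version: uniformly over `1 ≤ m ≤ M_n`,
`n^{−1/2} E[(Σ_i (W_{t^n_{i+k_n}} − W_{t^n_i}))²]` is asymptotically
`(2c³/3) f'((2m−2)k_n/n)` where `t^n_i = f(i/n)`. -/
theorem brownian_preavg_second_moment_irregular
    {Ω : Type*} [MeasureSpace Ω] [IsProbabilityMeasure (ℙ : Measure Ω)]
    (W : ℝ → Ω → ℝ)
    (hW2 : ∀ t : ℝ, 0 ≤ t → MemLp (W t) 2 ℙ)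
    (hWmean : ∀ t : ℝ, 0 ≤ t → ∫ ω, W t ω ∂ℙ = 0)
    (hWcov : ∀ s t : ℝ, 0 ≤ s → 0 ≤ t → ∫ ω, W s ω * W t ω ∂ℙ = min s t)
    (c : ℝ) (hc : 0 < c)
    (f f' : ℝ → ℝ)
    (hmono : StrictMonoOn f (Set.Icc 0 1))
    (hmaps : Set.MapsTo f (Set.Icc 0 1) (Set.Icc 0 1))
    (hf0 : f 0 = 0) (hf1 : f 1 = 1)
    (hderiv : ∀ x ∈ Set.Icc (0 : ℝ) 1, HasDerivAt f (f' x) x)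
    (L : NNReal) (hlip : LipschitzOnWith L f' (Set.Icc 0 1)) :
    ∀ ε : ℝ, 0 < ε → ∃ N : ℕ, ∀ n ≥ N, ∀ m : ℕ, 1 ≤ m → m ≤ Mn c n →
      |(n : ℝ) ^ (-((1 : ℝ) / 2)) *
          ∫ ω, (∑ i ∈ Finset.Icc ((2 * m - 2) * kfloor c n) ((2 * m - 1) * kfloor c n),
              (W (f (((i + kfloor c n : ℕ) : ℝ) / (n : ℝ))) ω
                - W (f ((i : ℝ) / (n : ℝ))) ω)) ^ 2 ∂ℙ
        - (2 * c ^ 3 / 3) * f' ((((2 * m - 2) * kfloor c n : ℕ) : ℝ) / (n : ℝ))| < ε :=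
  brownian_preavg_second_moment_irregular_general W hW2 hWcov c hc f f' hmono hf0 hderiv L hlip

end DepNoise
end
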